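/- arXiv:2107.08085 — 5 statements merged into one kernel-verified Lean document; each statement's English description precedes it below -/
import Mathlib

section
/- Let X be a set with an action of a finite group G, and let A ⊆ X be a subset such that |A \ gA| ≤ r for every g ∈ G, where r > 0. Define A₀ := ⋃_{S ⊆ G, |S| > |G|/2} ⋂_{g ∈ S} gA. Then A₀ is G-invariant and |A \ A₀| + |A₀ \ A| ≤ 2r. -/
open Pointwise symmDiff

section
variable {X G : Type*} [Group G] [Fintype G] [MulAction G X]

noncomputable def cnt (G : Type*) [Group G] [MulAction G X] (A : Set X) (x : X) : ℕ :=
  ({g : G | x ∈ g • A}).ncard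

lemma filter_card_eq_ncard (p : G → Prop) [DecidablePred p] :
    (Finset.univ.filter p).card = {g : G | p g}.ncard := by
  rw [← Set.ncard_coe_finset]
  congr 1
  ext g; simp

lemma main_count (A : Set X) (r : ℕ)
    (hfin : ∀ g : G, (A \ g • A).Finite)
    (hcard : ∀ g : G, (A \ g • A).ncard ≤ r)
    (hinv : ∀ g : G, g • {x : X | Fintype.card G < 2 * cnt G A x}
       = {x : X | Fintype.card G < 2 * cnt G A x}) :
    (A \ {x : X | Fintype.card G < 2 * cnt G A x}).ncard
      + ({x : X | Fintype.card G < 2 * cnt G A x} \ A).ncard ≤ 2 * r := by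
  classical
  set n := Fintype.card G with hn
  have hnpos : 0 < n := Fintype.card_pos
  set A₀ := {x : X | n < 2 * cnt G A x} with hA₀
  -- inverse-direction finiteness
  have hflip : ∀ g : G, g • A \ A = g • (A \ g⁻¹ • A) := by
    intro g
    rw [Set.smul_set_sdiff, smul_inv_smul]
  have hfin' : ∀ g : G, (g • A \ A).Finite := by
    intro g; rw [hflip]; exact ((hfin g⁻¹).image _)
  have hcard' : ∀ g : G, (g • A \ A).ncard ≤ r := by
    intro g; rw [hflip, Set.ncard_smul_set]; exact hcard g⁻¹
  set V := ⋃ g : G, ((A \ g • A) ∪ (g • A \ A)) with hV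
  have hVfin : V.Finite := Set.finite_iUnion (fun g => (hfin g).union (hfin' g))
  have hsubgA : ∀ g : G, (A ∆ (g • A)) ⊆ V := by
    intro g
    rw [Set.symmDiff_def]
    exact Set.union_subset
      (fun x hx => Set.mem_iUnion.2 ⟨g, Or.inl hx⟩)
      (fun x hx => Set.mem_iUnion.2 ⟨g, Or.inr hx⟩)
  have hcx_le : ∀ x : X, cnt G A x ≤ n := by
    intro x
    calc cnt G A x ≤ (Set.univ : Set G).ncard := Set.ncard_le_ncard (Set.subset_univ _) (Set.toFinite _)
    _ = n := by rw [Set.ncard_univ, Nat.card_eq_fintype_card]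
  have hsub0 : (A₀ ∆ A) ⊆ V := by
    intro x hx
    rw [Set.mem_symmDiff] at hx
    rcases hx with ⟨hx0, hxA⟩ | ⟨hxA, hx0⟩
    · -- x ∈ A₀ \ A : some g with x ∈ g•A
      have h1 : n < 2 * cnt G A x := hx0
      have hc : cnt G A x = ({g : G | x ∈ g • A}).ncard := rfl
      obtain ⟨g, hg⟩ := Set.nonempty_of_ncard_ne_zero (by omega : ({g : G | x ∈ g • A}).ncard ≠ 0)
      exact Set.mem_iUnion.2 ⟨g, Or.inr ⟨hg, hxA⟩⟩
    · -- x ∈ A \ A₀ : some g with x ∉ g•A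
      have h1 : cnt G A x < n := by
        by_contra h
        have hc : cnt G A x = ({g : G | x ∈ g • A}).ncard := rfl
        have heq : {g : G | x ∈ g • A} = Set.univ :=
          Set.eq_of_subset_of_ncard_le (Set.subset_univ _)
            (by rw [Set.ncard_univ, Nat.card_eq_fintype_card]; omega) Set.finite_univ
        have hceq : cnt G A x = n := by
          rw [hc, heq, Set.ncard_univ, Nat.card_eq_fintype_card]
        have hx0' : ¬ (n < 2 * cnt G A x) := hx0
        omega
      have : {g : G | x ∈ g • A} ≠ Set.univ := by
        intro h
        rw [hn] at h1
        have : cnt G A x = n := by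
          rw [cnt, h, Set.ncard_univ, Nat.card_eq_fintype_card]
        omega
      obtain ⟨g, hg⟩ : ∃ g : G, x ∉ g • A := by
        by_contra h
        push_neg at h
        exact this (Set.eq_univ_of_forall h)
      exact Set.mem_iUnion.2 ⟨g, Or.inl ⟨hxA, hg⟩⟩
  have hsub0g : ∀ g : G, (A₀ ∆ (g • A)) ⊆ V := by
    intro g
    calc A₀ ∆ (g • A) ⊆ (A₀ ∆ A) ∪ (A ∆ (g • A)) := symmDiff_triangle A₀ A (g • A)
    _ ⊆ V := Set.union_subset hsub0 (hsubgA g)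
  -- the trace finset
  set u := hVfin.toFinset with hu
  have key : ∀ S : Set X, S ⊆ V → (u.filter (· ∈ S)).card = S.ncard := by
    intro S hS
    have hSfin : S.Finite := hVfin.subset hS
    rw [← Set.ncard_coe_finset]
    congr 1
    ext x
    simp only [Finset.coe_filter, Set.mem_setOf_eq, hu, Set.Finite.mem_toFinset]
    exact ⟨fun h => h.2, fun h => ⟨hS h, h⟩⟩
  -- pointwise inequality
  have pointwise : ∀ x : X,
      (Finset.univ.filter fun g : G => x ∈ A₀ ∆ (g • A)).card
        ≤ (Finset.univ.filter fun g : G => x ∈ A ∆ (g • A)).card := by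
    intro x
    have hc1 : (Finset.univ.filter fun g : G => x ∈ g • A).card = cnt G A x := by
      rw [filter_card_eq_ncard]; rfl
    have hc2 : (Finset.univ.filter fun g : G => x ∉ g • A).card = n - cnt G A x := by
      have := Finset.card_filter_add_card_filter_not
        (s := (Finset.univ : Finset G)) (p := fun g : G => x ∈ g • A)
      rw [Finset.card_univ] at this
      omega
    have hle := hcx_le x
    by_cases hx0 : x ∈ A₀ <;> by_cases hxA : x ∈ A
    · have e1 : (Finset.univ.filter fun g : G => x ∈ A₀ ∆ (g • A))
          = Finset.univ.filter fun g : G => x ∉ g • A := by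
        apply Finset.filter_congr; intro g _; simp [Set.mem_symmDiff, hx0]
      have e2 : (Finset.univ.filter fun g : G => x ∈ A ∆ (g • A))
          = Finset.univ.filter fun g : G => x ∉ g • A := by
        apply Finset.filter_congr; intro g _; simp [Set.mem_symmDiff, hxA]
      rw [e1, e2]
    · have h2 : n < 2 * cnt G A x := hx0
      have e1 : (Finset.univ.filter fun g : G => x ∈ A₀ ∆ (g • A))
          = Finset.univ.filter fun g : G => x ∉ g • A := by
        apply Finset.filter_congr; intro g _; simp [Set.mem_symmDiff, hx0]
      have e2 : (Finset.univ.filter fun g : G => x ∈ A ∆ (g • A))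
          = Finset.univ.filter fun g : G => x ∈ g • A := by
        apply Finset.filter_congr; intro g _; simp [Set.mem_symmDiff, hxA]
      rw [e1, e2, hc1, hc2]
      omega
    · have h2 : ¬ (n < 2 * cnt G A x) := hx0
      have e1 : (Finset.univ.filter fun g : G => x ∈ A₀ ∆ (g • A))
          = Finset.univ.filter fun g : G => x ∈ g • A := by
        apply Finset.filter_congr; intro g _; simp [Set.mem_symmDiff, hx0]
      have e2 : (Finset.univ.filter fun g : G => x ∈ A ∆ (g • A))
          = Finset.univ.filter fun g : G => x ∉ g • A := by
        apply Finset.filter_congr; intro g _; simp [Set.mem_symmDiff, hxA]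
      rw [e1, e2, hc1, hc2]
      omega
    · have e1 : (Finset.univ.filter fun g : G => x ∈ A₀ ∆ (g • A))
          = Finset.univ.filter fun g : G => x ∈ g • A := by
        apply Finset.filter_congr; intro g _; simp [Set.mem_symmDiff, hx0]
      have e2 : (Finset.univ.filter fun g : G => x ∈ A ∆ (g • A))
          = Finset.univ.filter fun g : G => x ∈ g • A := by
        apply Finset.filter_congr; intro g _; simp [Set.mem_symmDiff, hxA]
      rw [e1, e2]
  -- sum inequality
  have hsum : ∑ g : G, (A₀ ∆ (g • A)).ncard ≤ ∑ g : G, (A ∆ (g • A)).ncard := by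
    have l : ∀ g : G, (A₀ ∆ (g • A)).ncard = (u.filter (· ∈ A₀ ∆ (g • A))).card :=
      fun g => (key _ (hsub0g g)).symm
    have rr : ∀ g : G, (A ∆ (g • A)).ncard = (u.filter (· ∈ A ∆ (g • A))).card :=
      fun g => (key _ (hsubgA g)).symm
    simp only [l, rr, Finset.card_filter]
    rw [Finset.sum_comm, Finset.sum_comm (s := Finset.univ) (t := u)]
    apply Finset.sum_le_sum
    intro x _
    have := pointwise x
    simpa only [Finset.card_filter] using this
  -- compute LHS sum
  have hLHS : ∀ g : G, (A₀ ∆ (g • A)).ncard = (A₀ ∆ A).ncard := by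
    intro g
    have : A₀ ∆ (g • A) = g • (A₀ ∆ A) := by
      rw [Set.symmDiff_def, Set.symmDiff_def, Set.smul_set_union, Set.smul_set_sdiff,
        Set.smul_set_sdiff, hinv g]
    rw [this, Set.ncard_smul_set]
  -- bound RHS terms
  have hRHS : ∀ g : G, (A ∆ (g • A)).ncard ≤ 2 * r := by
    intro g
    rw [Set.symmDiff_def]
    calc (A \ g • A ∪ g • A \ A).ncard
        ≤ (A \ g • A).ncard + (g • A \ A).ncard :=
          Set.ncard_union_le _ _
    _ ≤ 2 * r := by have := hcard g; have := hcard' g; omega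
  have hfinal : n * (A₀ ∆ A).ncard ≤ n * (2 * r) := by
    calc n * (A₀ ∆ A).ncard = ∑ _g : G, (A₀ ∆ A).ncard := by
          rw [Finset.sum_const, Finset.card_univ, smul_eq_mul]
    _ = ∑ g : G, (A₀ ∆ (g • A)).ncard := by
          apply Finset.sum_congr rfl; intro g _; rw [hLHS g]
    _ ≤ ∑ g : G, (A ∆ (g • A)).ncard := hsum
    _ ≤ ∑ _g : G, 2 * r := Finset.sum_le_sum (fun g _ => hRHS g)
    _ = n * (2 * r) := by rw [Finset.sum_const, Finset.card_univ, smul_eq_mul]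
  have hbound : (A₀ ∆ A).ncard ≤ 2 * r := Nat.le_of_mul_le_mul_left hfinal hnpos
  -- split the symmetric difference
  have hsplit : (A₀ ∆ A).ncard = (A \ A₀).ncard + (A₀ \ A).ncard := by
    rw [Set.symmDiff_def]
    rw [Set.ncard_union_eq (disjoint_sdiff_sdiff)
      (hVfin.subset (fun x hx => hsub0 (by rw [Set.symmDiff_def]; exact Or.inl hx)))
      (hVfin.subset (fun x hx => hsub0 (by rw [Set.symmDiff_def]; exact Or.inr hx)))]
    omega
  omega
lemma aux_union_eq (A : Set X) :
    (⋃ S ∈ {S : Set G | Nat.card G < 2 * S.ncard}, ⋂ g' ∈ S, g' • A)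
      = {x : X | Fintype.card G < 2 * cnt G A x} := by
  ext x
  simp only [Set.mem_iUnion, Set.mem_iInter, Set.mem_setOf_eq, Nat.card_eq_fintype_card]
  constructor
  · rintro ⟨S, hS, hx⟩
    refine lt_of_lt_of_le hS ?_
    have h2 : S.ncard ≤ cnt G A x :=
      Set.ncard_le_ncard (fun g hg => hx g hg) (Set.toFinite _)
    omega
  · intro hx
    exact ⟨{g : G | x ∈ g • A}, hx, fun g hg => hg⟩

lemma cnt_smul (A : Set X) (g : G) (x : X) : cnt G A (g⁻¹ • x) = cnt G A x := by
  unfold cnt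
  have : {h : G | g⁻¹ • x ∈ h • A} = (fun k => g⁻¹ * k) '' {k : G | x ∈ k • A} := by
    ext h
    simp only [Set.mem_setOf_eq, Set.mem_image]
    constructor
    · intro hh
      refine ⟨g * h, ?_, by group⟩
      rwa [show (g * h) • A = g • h • A by rw [smul_smul],
        Set.mem_smul_set_iff_inv_smul_mem]
    · rintro ⟨k, hk, rfl⟩
      rw [show (g⁻¹ * k) • A = g⁻¹ • k • A by rw [smul_smul]]
      exact Set.smul_mem_smul_set hk
  rw [this, Set.ncard_image_of_injective _ (mul_right_injective g⁻¹)]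

lemma aux_invariant (A : Set X) (g : G) :
    g • {x : X | Fintype.card G < 2 * cnt G A x} = {x : X | Fintype.card G < 2 * cnt G A x} := by
  ext x
  rw [Set.mem_smul_set_iff_inv_smul_mem]
  simp only [Set.mem_setOf_eq, cnt_smul]
end

/-- Theorem 3.1 (Neumann-type): if `|A \ gA| ≤ r` for all `g` in a finite group `G`
acting on `X`, then `A₀ := ⋃_{S ⊆ G, |S| > |G|/2} ⋂_{g ∈ S} gA` is `G`-invariant and
`|A \ A₀| + |A₀ \ A| ≤ 2r`. -/
theorem stmt0 {X : Type*} {G : Type*} [Group G] [Finite G] [MulAction G X]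
    (A : Set X) (r : ℕ) (hr : 0 < r)
    (hfin : ∀ g : G, (A \ g • A).Finite)
    (hcard : ∀ g : G, (A \ g • A).ncard ≤ r) :
    (∀ g : G, g • (⋃ S ∈ {S : Set G | Nat.card G < 2 * S.ncard}, ⋂ g' ∈ S, g' • A)
        = ⋃ S ∈ {S : Set G | Nat.card G < 2 * S.ncard}, ⋂ g' ∈ S, g' • A) ∧
    (A \ ⋃ S ∈ {S : Set G | Nat.card G < 2 * S.ncard}, ⋂ g' ∈ S, g' • A).ncard
      + ((⋃ S ∈ {S : Set G | Nat.card G < 2 * S.ncard}, ⋂ g' ∈ S, g' • A) \ A).ncard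
      ≤ 2 * r := by
  cases nonempty_fintype G
  rw [aux_union_eq A]
  exact ⟨aux_invariant A, main_count A r hfin hcard (aux_invariant A)⟩
end

section
/- Let V be a vector space over a field k, G a group acting linearly on V, and X a G-invariant collection of subspaces of V such that dim(A_x/(A_x ∩ A_y)) ≤ r for all x, y ∈ X, where r ≥ 1. Then there exists a G-invariant subspace W ⊆ V, expressible as a finite sum of finite intersections of subspaces from X, such that dim(W/(W ∩ A_x)) ≤ r and dim(A_x/(W ∩ A_x)) ≤ r·(r+1)^(r+1) for all x ∈ X. -/
open Pointwise

namespace WagnerAux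

open Submodule Cardinal

variable {k : Type*} [Field k]

section Generic

universe u
variable {M : Type u} [AddCommGroup M] [Module k M]
variable {N : Type u} [AddCommGroup N] [Module k N]

lemma rank_map_eq_rank_quot (f : M →ₗ[k] N) (P : Submodule k M) :
    Module.rank k ↥(P.map f)
      = Module.rank k (↥P ⧸ Submodule.comap P.subtype (LinearMap.ker f)) := by
  have h1 : Submodule.comap P.subtype (LinearMap.ker f) = LinearMap.ker (f.comp P.subtype) := by
    rw [LinearMap.ker_comp]
  have h2 : P.map f = LinearMap.range (f.comp P.subtype) := by
    rw [LinearMap.range_comp, Submodule.range_subtype]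
  rw [h1, h2]
  exact ((f.comp P.subtype).quotKerEquivRange).rank_eq.symm

lemma rank_quot_mono {a b : Submodule k M} (h : a ≤ b) :
    Module.rank k (M ⧸ b) ≤ Module.rank k (M ⧸ a) := by
  have h' : a ≤ Submodule.comap LinearMap.id b := h
  apply LinearMap.rank_le_of_surjective (Submodule.mapQ a b LinearMap.id h')
  intro y
  obtain ⟨x, rfl⟩ := Submodule.Quotient.mk_surjective b y
  exact ⟨Submodule.Quotient.mk x, by simp [Submodule.mapQ_apply]⟩

lemma rank_quot_inf_le (a b : Submodule k M) :
    Module.rank k (M ⧸ a ⊓ b) ≤ Module.rank k (M ⧸ a) + Module.rank k (M ⧸ b) := by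
  have hker : a ⊓ b = LinearMap.ker (LinearMap.prod a.mkQ b.mkQ) := by
    rw [LinearMap.ker_prod, Submodule.ker_mkQ, Submodule.ker_mkQ]
  rw [hker]
  calc Module.rank k (M ⧸ LinearMap.ker (LinearMap.prod a.mkQ b.mkQ))
      = Module.rank k ↥(LinearMap.range (LinearMap.prod a.mkQ b.mkQ)) :=
        (LinearMap.quotKerEquivRange _).rank_eq
    _ ≤ Module.rank k ((M ⧸ a) × (M ⧸ b)) := Submodule.rank_le _
    _ = Module.rank k (M ⧸ a) + Module.rank k (M ⧸ b) := rank_prod'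

lemma rank_le_map_mkQ_add (a b : Submodule k M) :
    Module.rank k ↥a ≤ Module.rank k ↥(a.map b.mkQ) + Module.rank k ↥b := by
  have h := LinearMap.rank_range_add_rank_ker (b.mkQ.comp a.subtype)
  have hr : LinearMap.range (b.mkQ.comp a.subtype) = a.map b.mkQ := by
    rw [LinearMap.range_comp, Submodule.range_subtype]
  have hk : LinearMap.ker (b.mkQ.comp a.subtype) = Submodule.comap a.subtype b := by
    rw [LinearMap.ker_comp, Submodule.ker_mkQ]
  rw [hr, hk] at h
  have h2 : Module.rank k ↥(Submodule.comap a.subtype b) ≤ Module.rank k ↥b := by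
    have e := Submodule.equivMapOfInjective a.subtype (Submodule.injective_subtype a)
      (Submodule.comap a.subtype b)
    rw [e.rank_eq, Submodule.map_comap_subtype]
    exact Submodule.rank_mono inf_le_right
  calc Module.rank k ↥a
      = Module.rank k ↥(a.map b.mkQ) + Module.rank k ↥(Submodule.comap a.subtype b) := h.symm
    _ ≤ _ := add_le_add le_rfl h2

lemma eq_of_le_of_rank_le {p q : Submodule k M} (hpq : p ≤ q)
    (hrk : Module.rank k ↥q ≤ Module.rank k ↥p)
    (hfin : Module.rank k ↥q < Cardinal.aleph0) : p = q := by
  set p' : Submodule k ↥q := Submodule.comap q.subtype p with hp'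
  have hsum := Submodule.rank_quotient_add_rank p'
  have hpp : Module.rank k ↥p' = Module.rank k ↥p :=
    (Submodule.comapSubtypeEquivOfLe hpq).rank_eq
  obtain ⟨nq, hnq⟩ := Cardinal.lt_aleph0.mp hfin
  have hfp : Module.rank k ↥p < Cardinal.aleph0 :=
    lt_of_le_of_lt (Submodule.rank_mono hpq) hfin
  obtain ⟨np, hnp⟩ := Cardinal.lt_aleph0.mp hfp
  have hfq' : Module.rank k (↥q ⧸ p') < Cardinal.aleph0 := by
    refine lt_of_le_of_lt ?_ hfin
    rw [← hsum]; exact self_le_add_right _ _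
  obtain ⟨nn, hnn⟩ := Cardinal.lt_aleph0.mp hfq'
  rw [hpp] at hsum
  rw [hnn, hnp, hnq] at hsum
  have hsum' : nn + np = nq := by exact_mod_cast hsum
  have hle : nq ≤ np := by
    rw [hnq, hnp] at hrk; exact_mod_cast hrk
  have hnn0 : nn = 0 := by omega
  have hsub : Subsingleton (↥q ⧸ p') := by
    rw [← rank_zero_iff (R := k)]
    rw [hnn, hnn0]; simp
  have : p' = ⊤ := (Submodule.Quotient.subsingleton_iff).mp hsub
  have hqp : q ≤ p := Submodule.comap_subtype_eq_top.mp this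
  exact le_antisymm hpq hqp

lemma rank_lt_of_lt {p q : Submodule k M} (h : p < q)
    (hfin : Module.rank k ↥q < Cardinal.aleph0) :
    Module.rank k ↥p < Module.rank k ↥q := by
  rcases lt_or_ge (Module.rank k ↥p) (Module.rank k ↥q) with h1 | h1
  · exact h1
  · exact absurd (eq_of_le_of_rank_le h.le h1 hfin) h.ne

lemma nat_cast_succ_le_of_lt {n : ℕ} {c : Cardinal} (h : (n : Cardinal) < c) :
    ((n + 1 : ℕ) : Cardinal) ≤ c := by
  have : ((n + 1 : ℕ) : Cardinal) = Order.succ (n : Cardinal) := Cardinal.nat_succ n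
  rw [this]
  exact Order.succ_le_of_lt h

lemma rank_finset_sup_le {ι : Type*} (J : ι → Submodule k M) (u : Finset ι) {c : Cardinal}
    (hJ : ∀ i, Module.rank k ↥(J i) ≤ c) :
    Module.rank k ↥(u.sup J) ≤ (u.card : Cardinal) * c := by
  classical
  induction u using Finset.induction_on with
  | empty => simp [rank_bot]
  | @insert a u ha ih =>
    rw [Finset.sup_insert]
    refine le_trans (Submodule.rank_add_le_rank_add_rank _ _) ?_
    rw [Finset.card_insert_of_notMem ha]
    have : ((u.card + 1 : ℕ) : Cardinal) * c = (u.card : Cardinal) * c + c := by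
      push_cast; ring
    rw [this]
    rw [add_comm ((u.card : Cardinal) * c) c]
    exact add_le_add (hJ a) ih

lemma rank_finset_sup_lt_aleph0 {ι : Type*} (J : ι → Submodule k M) (u : Finset ι) {r : ℕ}
    (hJ : ∀ i, Module.rank k ↥(J i) ≤ (r : Cardinal)) :
    Module.rank k ↥(u.sup J) < Cardinal.aleph0 := by
  refine lt_of_le_of_lt (rank_finset_sup_le J u hJ) ?_
  have : (u.card : Cardinal) * (r : Cardinal) = ((u.card * r : ℕ) : Cardinal) := by push_cast; ring
  rw [this]
  exact Cardinal.nat_lt_aleph0 _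

lemma extract_small_witness {ι : Type*} (J : ι → Submodule k M) {r : ℕ}
    (hJ : ∀ i, Module.rank k ↥(J i) ≤ (r : Cardinal)) (u : Finset ι) :
    ∀ n : ℕ, (n : Cardinal) ≤ Module.rank k ↥(u.sup J) →
    ∃ u' : Finset ι, u' ⊆ u ∧ u'.card ≤ n ∧ (n : Cardinal) ≤ Module.rank k ↥(u'.sup J) := by
  classical
  intro n
  induction n with
  | zero => intro _; exact ⟨∅, Finset.empty_subset u, le_rfl, by simp⟩
  | succ n ih =>
    intro hn
    have hn' : (n : Cardinal) ≤ Module.rank k ↥(u.sup J) :=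
      le_trans (by exact_mod_cast Nat.cast_le.mpr (Nat.le_succ n)) hn
    obtain ⟨u', hsub, hcard, hrk⟩ := ih hn'
    by_cases hc : ((n + 1 : ℕ) : Cardinal) ≤ Module.rank k ↥(u'.sup J)
    · exact ⟨u', hsub, Nat.le_succ_of_le hcard, hc⟩
    · have hne : u'.sup J ≠ u.sup J := fun he => hc (he ▸ hn)
      have hlt : u'.sup J < u.sup J := lt_of_le_of_ne (Finset.sup_mono hsub) hne
      have hex : ∃ a ∈ u, ¬ J a ≤ u'.sup J := by
        by_contra hcon
        push_neg at hcon
        exact hne (le_antisymm hlt.le (Finset.sup_le hcon))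
      obtain ⟨a, hau, hna⟩ := hex
      refine ⟨insert a u', Finset.insert_subset hau hsub, ?_, ?_⟩
      · exact le_trans (Finset.card_insert_le _ _) (Nat.succ_le_succ hcard)
      · have hlt2 : u'.sup J < (insert a u').sup J := by
          rw [Finset.sup_insert]
          refine lt_of_le_of_ne le_sup_right (fun he => hna ?_)
          rw [he]; exact le_sup_left
        have h1 := rank_lt_of_lt hlt2 (rank_finset_sup_lt_aleph0 J _ hJ)
        have h2 : (n : Cardinal) < Module.rank k ↥((insert a u').sup J) :=
          lt_of_le_of_lt hrk h1
        exact nat_cast_succ_le_of_lt h2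

lemma rank_iSup_le_of_small {ι : Type*} (J : ι → Submodule k M) (r : ℕ)
    (hJ : ∀ i, Module.rank k ↥(J i) ≤ (r : Cardinal))
    (hsmall : ∀ u : Finset ι, u.card ≤ r + 1 → Module.rank k ↥(u.sup J) ≤ (r : Cardinal)) :
    Module.rank k ↥(⨆ i, J i) ≤ (r : Cardinal) := by
  classical
  have hall : ∀ u : Finset ι, Module.rank k ↥(u.sup J) ≤ (r : Cardinal) := by
    intro u
    by_contra hlt
    push_neg at hlt
    have h1 : ((r + 1 : ℕ) : Cardinal) ≤ Module.rank k ↥(u.sup J) := nat_cast_succ_le_of_lt hlt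
    obtain ⟨u', _, hcard, hrk⟩ := extract_small_witness J hJ u (r + 1) h1
    have := hsmall u' hcard
    have : ((r + 1 : ℕ) : Cardinal) ≤ (r : Cardinal) := le_trans hrk this
    have : r + 1 ≤ r := by exact_mod_cast this
    omega
  apply _root_.rank_le
  intro s hs
  have hmem : ∀ x : ↥(⨆ i, J i), ∃ v : Finset ι, (x : M) ∈ v.sup J := by
    intro x
    obtain ⟨v, hv⟩ := (Submodule.mem_iSup_iff_exists_finset).mp x.2
    refine ⟨v, ?_⟩
    rw [Finset.sup_eq_iSup]
    exact hv
  choose F hF using hmem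
  set u : Finset ι := s.sup F with hu
  have hsubmem : ∀ x : ↥(⨆ i, J i), x ∈ s → (x : M) ∈ u.sup J := by
    intro x hx
    have h1 : F x ⊆ u := Finset.le_sup hx
    exact (Finset.sup_mono (f := J) h1) (hF x)
  have hs' : LinearIndependent k (fun i : s => ((i : ↥(⨆ i, J i)) : M)) :=
    hs.map' (⨆ i, J i).subtype (Submodule.ker_subtype _)
  set P := u.sup J with hP
  let w : s → ↥P := fun i => ⟨((i : ↥(⨆ i, J i)) : M), hsubmem i i.2⟩
  have hw : LinearIndependent k w := by
    apply LinearIndependent.of_comp P.subtype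
    exact hs'
  have hcard := hw.cardinal_le_rank
  rw [Cardinal.mk_coe_finset] at hcard
  have hle : (s.card : Cardinal) ≤ (r : Cardinal) := le_trans hcard (hall u)
  exact_mod_cast hle

end Generic

section Act

variable (k : Type*) [Field k] {V : Type*} [AddCommGroup V] [Module k V]
variable {G : Type*} [Group G] [DistribMulAction G V] [SMulCommClass G k V]

/-- The action of `g : G` on `V` as a `k`-linear map. -/
def aMap (g : G) : V →ₗ[k] V where
  toFun v := g • v
  map_add' v w := smul_add g v w
  map_smul' c v := smul_comm g c v

@[simp] lemma aMap_apply (g : G) (v : V) : aMap k g v = g • v := rfl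

lemma aMap_comp (g h : G) : (aMap k g).comp (aMap (V := V) k h) = aMap k (g * h) := by
  ext v; simp [mul_smul]

lemma aMap_one : aMap (V := V) k (1 : G) = LinearMap.id := by
  ext v; simp

lemma aMap_injective (g : G) : Function.Injective (aMap (V := V) k g) := by
  intro a b hab
  have := congrArg (fun v => g⁻¹ • v) hab
  simpa [inv_smul_smul] using this

lemma ker_aMap (g : G) : LinearMap.ker (aMap (V := V) k g) = ⊥ :=
  LinearMap.ker_eq_bot.mpr (aMap_injective k g)

lemma map_aMap_map_aMap (g h : G) (p : Submodule k V) :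
    (p.map (aMap k h)).map (aMap k g) = p.map (aMap k (g * h)) := by
  rw [← Submodule.map_comp, aMap_comp]

lemma map_aMap_inf (g : G) (p q : Submodule k V) :
    (p ⊓ q).map (aMap k g) = p.map (aMap k g) ⊓ q.map (aMap k g) := by
  apply le_antisymm
  · exact le_inf (Submodule.map_mono inf_le_left) (Submodule.map_mono inf_le_right)
  · rintro x ⟨⟨a, ha, rfl⟩, ⟨b, hb, hba⟩⟩
    have : b = a := aMap_injective k g hba
    subst this
    exact ⟨b, ⟨ha, hb⟩, rfl⟩

lemma map_aMap_top (g : G) : (⊤ : Submodule k V).map (aMap k g) = ⊤ := by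
  rw [Submodule.map_top, LinearMap.range_eq_top]
  intro v
  exact ⟨g⁻¹ • v, smul_inv_smul g v⟩

end Act

section Wagner

variable {k : Type*} [Field k] {V : Type*} [AddCommGroup V] [Module k V]
variable {G : Type*} [Group G] [DistribMulAction G V] [SMulCommClass G k V]
variable {X : Type*}

/-- `rk Q P = dim (P / (P ∩ Q))`, implemented as the rank of the image of `P` in `V ⧸ Q`. -/
noncomputable def rk (Q P : Submodule k V) : Cardinal := Module.rank k ↥(P.map Q.mkQ)

lemma rk_eq_quot (Q P : Submodule k V) :
    rk Q P = Module.rank k (↥P ⧸ Submodule.comap P.subtype Q) := by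
  rw [rk, rank_map_eq_rank_quot, Submodule.ker_mkQ]

lemma rk_mono_num {P P' : Submodule k V} (Q : Submodule k V) (h : P ≤ P') :
    rk Q P ≤ rk Q P' :=
  Submodule.rank_mono (Submodule.map_mono h)

lemma rk_mono_den {Q Q' : Submodule k V} (P : Submodule k V) (h : Q ≤ Q') :
    rk Q' P ≤ rk Q P := by
  rw [rk_eq_quot, rk_eq_quot]
  exact rank_quot_mono (Submodule.comap_mono h)

lemma rk_sup_le (Q P P' : Submodule k V) : rk Q (P ⊔ P') ≤ rk Q P + rk Q P' := by
  rw [rk, Submodule.map_sup]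
  exact Submodule.rank_add_le_rank_add_rank _ _

lemma rk_inf_den_le (Q Q' P : Submodule k V) : rk (Q ⊓ Q') P ≤ rk Q P + rk Q' P := by
  rw [rk_eq_quot, rk_eq_quot, rk_eq_quot, Submodule.comap_inf]
  exact rank_quot_inf_le _ _

lemma map_mkQ_eq_bot {P Q : Submodule k V} (h : P ≤ Q) : P.map Q.mkQ = ⊥ := by
  rw [Submodule.eq_bot_iff]
  rintro x ⟨v, hv, rfl⟩
  simpa [Submodule.mkQ_apply, Submodule.Quotient.mk_eq_zero] using h hv

lemma rk_map_aMap (g : G) (Q P : Submodule k V) :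
    rk (Q.map (aMap k g)) (P.map (aMap k g)) = rk Q P := by
  rw [rk, ← Submodule.map_comp]
  rw [rank_map_eq_rank_quot]
  have hker : LinearMap.ker ((Q.map (aMap k g)).mkQ.comp (aMap k g)) = Q := by
    rw [LinearMap.ker_comp, Submodule.ker_mkQ, Submodule.comap_map_eq, ker_aMap, sup_bot_eq]
  rw [hker, ← rk_eq_quot]

variable (A : X → Submodule k V)

/-- `D` is a finite nonempty intersection of members of the family. -/
def IsInter (D : Submodule k V) : Prop := ∃ S : Finset X, S.Nonempty ∧ D = S.inf A

variable (G) in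
/-- The sum of the orbit of `D` under `G`. -/
noncomputable def orbSum (D : Submodule k V) : Submodule k V :=
  ⨆ g : G, D.map (aMap k g)

variable (G) in
/-- `D` is good if the sum of its orbit has small image modulo every member. -/
def Good (r : ℕ) (D : Submodule k V) : Prop :=
  ∀ x : X, rk (A x) (orbSum (k := k) G D) ≤ (r : Cardinal)


lemma isInter_inf {D D' : Submodule k V} (h : IsInter A D) (h' : IsInter A D') :
    IsInter A (D ⊓ D') := by
  classical
  obtain ⟨S, hS, rfl⟩ := h
  obtain ⟨S', hS', rfl⟩ := h'
  obtain ⟨a, ha⟩ := hS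
  exact ⟨S ∪ S', ⟨a, Finset.mem_union_left _ ha⟩, (Finset.inf_union).symm⟩

lemma map_finset_inf (g : G) (S : Finset X) (f : X → Submodule k V) :
    (S.inf f).map (aMap k g) = S.inf (fun s => (f s).map (aMap k g)) := by
  classical
  induction S using Finset.induction_on with
  | empty => simpa using map_aMap_top k g
  | @insert a S ha ih => rw [Finset.inf_insert, Finset.inf_insert, map_aMap_inf, ih]

lemma isInter_map (hmem : ∀ g : G, ∀ x : X, ∃ y : X, (A x).map (aMap k g) = A y)
    (g : G) {D : Submodule k V} (hD : IsInter A D) : IsInter A (D.map (aMap k g)) := by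
  classical
  obtain ⟨S, hS, rfl⟩ := hD
  choose y hy using hmem g
  refine ⟨S.image y, hS.image y, ?_⟩
  rw [map_finset_inf, Finset.inf_image]
  refine Finset.inf_congr rfl ?_
  intro s _
  exact hy s

lemma isInter_finset_inf {ι : Type*} (u : Finset ι) (f : ι → Submodule k V)
    {B : Submodule k V} (hB : IsInter A B) (hf : ∀ g ∈ u, IsInter A (f g)) :
    IsInter A (B ⊓ u.inf f) := by
  classical
  induction u using Finset.induction_on with
  | empty => simpa using hB
  | @insert a u ha ih =>
    rw [Finset.inf_insert, inf_left_comm]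
    exact isInter_inf A (hf a (Finset.mem_insert_self a u))
      (ih (fun g hg => hf g (Finset.mem_insert_of_mem hg)))

lemma rk_finset_inf_le {ι : Type*} (u : Finset ι) (f : ι → Submodule k V)
    (B P : Submodule k V) :
    rk (B ⊓ u.inf f) P ≤ rk B P + ∑ g ∈ u, rk (f g) P := by
  classical
  induction u using Finset.induction_on with
  | empty => simp
  | @insert a u ha ih =>
    rw [Finset.inf_insert, inf_left_comm, Finset.sum_insert ha]
    calc rk (f a ⊓ (B ⊓ u.inf f)) P ≤ rk (f a) P + rk (B ⊓ u.inf f) P :=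
          rk_inf_den_le _ _ _
      _ ≤ rk (f a) P + (rk B P + ∑ g ∈ u, rk (f g) P) := add_le_add le_rfl ih
      _ = rk B P + (rk (f a) P + ∑ g ∈ u, rk (f g) P) := by ring

lemma descent [Nonempty X] (r : ℕ)
    (hmem : ∀ g : G, ∀ x : X, ∃ y : X, (A x).map (aMap k g) = A y)
    (hmem' : ∀ g : G, ∀ x : X, ∃ y : X, (A y).map (aMap k g) = A x)
    (hAr : ∀ x y : X, rk (A x) (A y) ≤ (r : Cardinal)) :
    ∀ m c : ℕ, ∀ D : Submodule k V, IsInter A D → (∃ s : X, D ≤ A s) →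
      (∀ x : X, rk (A x) D ≤ (m : Cardinal)) → (∀ z : X, rk D (A z) ≤ (c : Cardinal)) →
      ∃ E : Submodule k V, IsInter A E ∧ (∃ s : X, E ≤ A s) ∧ Good G A r E ∧
        ∀ z : X, rk E (A z) ≤ (((r+1)^m * (c+1) - 1 : ℕ) : Cardinal) := by
  intro m
  induction m with
  | zero =>
    intro c D hint hsub hmu hc
    refine ⟨D, hint, hsub, ?_, ?_⟩
    · intro x
      have hbot : ∀ g : G, (D.map (aMap k g)).map (A x).mkQ = ⊥ := by
        intro g
        have h0 : rk (A x) (D.map (aMap k g)) ≤ ((0 : ℕ) : Cardinal) := by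
          obtain ⟨y, hy⟩ := hmem' g x
          rw [← hy, rk_map_aMap]
          exact hmu y
        rw [Nat.cast_zero] at h0
        have h1 : Module.rank k ↥((D.map (aMap k g)).map (A x).mkQ) = 0 :=
          le_antisymm h0 zero_le
        exact (Submodule.rank_eq_zero).mp h1
      have hcomp : (orbSum (k := k) G D).map (A x).mkQ
          = ⨆ g : G, (D.map (aMap k g)).map (A x).mkQ := by
        rw [orbSum, Submodule.map_iSup]
      show rk (A x) (orbSum (k := k) G D) ≤ (r : Cardinal)
      rw [rk, hcomp]
      have hsupbot : (⨆ g : G, (D.map (aMap k g)).map (A x).mkQ) = ⊥ :=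
        iSup_eq_bot.mpr hbot
      rw [hsupbot, rank_bot]
      exact zero_le
    · intro z
      refine le_trans (hc z) ?_
      have h1 : c ≤ (r+1)^0 * (c+1) - 1 := by simp
      exact_mod_cast Nat.cast_le.mpr h1
  | succ m ih =>
    intro c D hint hsub hmu hc
    by_cases hgood : Good G A r D
    · refine ⟨D, hint, hsub, hgood, fun z => le_trans (hc z) ?_⟩
      have hp : 0 < (r+1)^(m+1) := by positivity
      have h1 : c + 1 ≤ (r+1)^(m+1) * (c+1) := Nat.le_mul_of_pos_left _ hp
      have h2 : c ≤ (r+1)^(m+1) * (c+1) - 1 := by omega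
      exact_mod_cast Nat.cast_le.mpr h2
    · rw [Good] at hgood
      push_neg at hgood
      obtain ⟨x, hx⟩ := hgood
      classical
      set K : G → Submodule k (V ⧸ A x) := fun g => (D.map (aMap k g)).map (A x).mkQ with hK
      have hKsup : (orbSum (k := k) G D).map (A x).mkQ = ⨆ g : G, K g := by
        rw [orbSum, Submodule.map_iSup]
      have hKsingle : ∀ g : G, Module.rank k ↥(K g) ≤ (r : Cardinal) := by
        intro g
        obtain ⟨s, hs⟩ := hsub
        obtain ⟨y, hy⟩ := hmem g s
        have h1 : D.map (aMap k g) ≤ A y := by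
          rw [← hy]; exact Submodule.map_mono hs
        calc Module.rank k ↥(K g) = rk (A x) (D.map (aMap k g)) := rfl
          _ ≤ rk (A x) (A y) := rk_mono_num _ h1
          _ ≤ (r : Cardinal) := hAr x y
      have hbig : ¬ Module.rank k ↥(⨆ g : G, K g) ≤ (r : Cardinal) := by
        intro hcon
        have hle : rk (A x) (orbSum (k := k) G D) ≤ (r : Cardinal) := by
          rw [rk, hKsup]; exact hcon
        exact absurd hle (not_le.mpr hx)
      obtain ⟨u, hucard, hur⟩ :
          ∃ u : Finset G, u.card ≤ r + 1 ∧ ¬ Module.rank k ↥(u.sup K) ≤ (r : Cardinal) := by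
        by_contra hcon
        push_neg at hcon
        exact hbig (rank_iSup_le_of_small K r hKsingle (fun u hu => hcon u hu))
      have hune : u.Nonempty := by
        rcases Finset.eq_empty_or_nonempty u with rfl | h
        · exact absurd (by rw [Finset.sup_empty, rank_bot]; exact zero_le : Module.rank k ↥((∅ : Finset G).sup K) ≤ (r : Cardinal)) hur
        · exact h
      obtain ⟨g₀, hg₀⟩ := hune
      set f : G → Submodule k V := fun g => D.map (aMap k g) with hf
      set D' : Submodule k V := A x ⊓ u.inf f with hD'
      have hD'sub : D' ≤ A x := inf_le_left
      have hD'le : ∀ g ∈ u, D' ≤ f g := fun g hg => le_trans inf_le_right (Finset.inf_le hg)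
      have hmu' : ∀ y : X, rk (A y) D' ≤ (m : Cardinal) := by
        by_contra hcon
        push_neg at hcon
        obtain ⟨y, hy⟩ := hcon
        have hKy : ∀ g ∈ u, K g ≤ (A y).map (A x).mkQ := by
          intro g hg
          have hMle : D'.map (A y).mkQ ≤ (f g).map (A y).mkQ :=
            Submodule.map_mono (hD'le g hg)
          have hfb : rk (A y) (f g) ≤ ((m+1 : ℕ) : Cardinal) := by
            obtain ⟨y', hy'⟩ := hmem' g y
            rw [hf]
            show rk (A y) (D.map (aMap k g)) ≤ _
            rw [← hy', rk_map_aMap]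
            exact hmu y'
          have hMgfin : Module.rank k ↥((f g).map (A y).mkQ) < Cardinal.aleph0 :=
            lt_of_le_of_lt hfb (Cardinal.nat_lt_aleph0 (m+1))
          have hMeq : D'.map (A y).mkQ = (f g).map (A y).mkQ := by
            refine eq_of_le_of_rank_le hMle ?_ hMgfin
            have h2 : ((m : ℕ) : Cardinal) < rk (A y) D' := hy
            have h3 : ((m+1 : ℕ) : Cardinal) ≤ rk (A y) D' := nat_cast_succ_le_of_lt h2
            exact le_trans hfb h3
          have h5 : f g ≤ D' ⊔ A y := by
            have h6 : f g ≤ Submodule.comap (A y).mkQ ((f g).map (A y).mkQ) :=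
              Submodule.le_comap_map _ _
            rw [← hMeq, Submodule.comap_map_eq, Submodule.ker_mkQ] at h6
            exact h6
          have h7 : f g ≤ A x ⊔ A y := le_trans h5 (sup_le_sup_right hD'sub _)
          calc K g = (f g).map (A x).mkQ := rfl
            _ ≤ (A x ⊔ A y).map (A x).mkQ := Submodule.map_mono h7
            _ = (A y).map (A x).mkQ := by
                rw [Submodule.map_sup, map_mkQ_eq_bot le_rfl, bot_sup_eq]
        apply hur
        have hsle : u.sup K ≤ (A y).map (A x).mkQ := Finset.sup_le hKy
        exact le_trans (Submodule.rank_mono hsle) (hAr x y)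
      have hc' : ∀ z : X, rk D' (A z) ≤ ((r + (r+1) * c : ℕ) : Cardinal) := by
        intro z
        refine le_trans (rk_finset_inf_le u f (A x) (A z)) ?_
        have hterm : ∀ g ∈ u, rk (f g) (A z) ≤ (c : Cardinal) := by
          intro g hg
          obtain ⟨y', hy'⟩ := hmem' g z
          rw [hf]
          show rk (D.map (aMap k g)) (A z) ≤ _
          rw [← hy', rk_map_aMap]
          exact hc y'
        calc rk (A x) (A z) + ∑ g ∈ u, rk (f g) (A z)
            ≤ (r : Cardinal) + ∑ _g ∈ u, (c : Cardinal) :=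
              add_le_add (hAr x z) (Finset.sum_le_sum hterm)
          _ = (r : Cardinal) + (u.card : Cardinal) * (c : Cardinal) := by
              rw [Finset.sum_const, nsmul_eq_mul]
          _ ≤ (r : Cardinal) + ((r+1 : ℕ) : Cardinal) * (c : Cardinal) := by
              refine add_le_add le_rfl (mul_le_mul_left ?_ _)
              exact_mod_cast Nat.cast_le.mpr hucard
          _ = ((r + (r+1) * c : ℕ) : Cardinal) := by push_cast; ring
      have hint' : IsInter A D' := by
        refine isInter_finset_inf A u f ?_ ?_
        · exact ⟨{x}, Finset.singleton_nonempty x, (Finset.inf_singleton).symm⟩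
        · intro g _
          exact isInter_map A hmem g hint
      obtain ⟨E, hE1, hE2, hE3, hE4⟩ :=
        ih (r + (r+1)*c) D' hint' ⟨x, hD'sub⟩ hmu' hc'
      refine ⟨E, hE1, hE2, hE3, fun z => le_trans (hE4 z) ?_⟩
      have harith : (r+1)^m * ((r + (r+1)*c) + 1) - 1 = (r+1)^(m+1) * (c+1) - 1 := by
        have h1 : (r + (r+1)*c) + 1 = (r+1) * (c+1) := by ring
        rw [h1, ← mul_assoc, ← pow_succ]
      rw [harith]

end Wagner

end WagnerAux

/-- Theorem A (Wagner's theorem with explicit bounds): if `G` acts linearly on `V`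
permuting a family of subspaces `A_x`, `x ∈ X`, with `dim(A_x/(A_x ∩ A_y)) ≤ r`
for all `x, y`, then there is a `G`-invariant subspace `W`, a finite sum of finite
intersections of the `A_x`, with `dim(W/(W ∩ A_x)) ≤ r` and
`dim(A_x/(W ∩ A_x)) ≤ r·(r+1)^(r+1)` for all `x`. -/
theorem stmt4 {k : Type*} [Field k] {V : Type*} [AddCommGroup V] [Module k V]
    {G : Type*} [Group G] [DistribMulAction G V] [SMulCommClass G k V]
    {X : Type*} [Nonempty X] (A : X → Submodule k V) (r : ℕ) (hr : 1 ≤ r)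
    (hG : ∀ (g : G) (x : X), ∃ y : X, g • (A x : Set V) = (A y : Set V))
    (hdim : ∀ x y : X,
      Module.rank k (↥(A x) ⧸ Submodule.comap (A x).subtype (A y)) ≤ r) :
    ∃ W : Submodule k V,
      (∀ g : G, g • (W : Set V) = W) ∧
      (∃ (n : ℕ) (T : Fin n → Finset X),
        (∀ i, (T i).Nonempty) ∧ W = ⨆ i, (T i).inf A) ∧
      (∀ x : X,
        Module.rank k (↥W ⧸ Submodule.comap W.subtype (A x)) ≤ r ∧
        Module.rank k (↥(A x) ⧸ Submodule.comap (A x).subtype W)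
          ≤ (r * (r + 1) ^ (r + 1) : ℕ)) := by
  classical
  open WagnerAux in
  have hmem : ∀ g : G, ∀ x : X, ∃ y : X, (A x).map (aMap k g) = A y := by
    intro g x
    obtain ⟨y, hy⟩ := hG g x
    refine ⟨y, SetLike.coe_injective ?_⟩
    rw [Submodule.map_coe, ← hy]
    ext v
    simp [Set.mem_smul_set]
  have hmem' : ∀ g : G, ∀ x : X, ∃ y : X, (A y).map (aMap k g) = A x := by
    intro g x
    obtain ⟨y, hy⟩ := hmem g⁻¹ x
    refine ⟨y, ?_⟩
    have h1 : ((A x).map (aMap k g⁻¹)).map (aMap k g) = A x := by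
      rw [map_aMap_map_aMap, mul_inv_cancel, aMap_one, Submodule.map_id]
    rw [hy] at h1
    exact h1
  have hAr : ∀ x y : X, rk (A x) (A y) ≤ (r : Cardinal) := by
    intro x y
    rw [rk_eq_quot]
    exact hdim y x
  obtain ⟨x₀⟩ := (inferInstance : Nonempty X)
  obtain ⟨E, hEint, hEsub, hEgood, hEc⟩ :=
    descent A r hmem hmem' hAr r r (A x₀)
      ⟨{x₀}, Finset.singleton_nonempty x₀, (Finset.inf_singleton).symm⟩
      ⟨x₀, le_rfl⟩ (fun x => hAr x x₀) (fun z => hAr x₀ z)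
  set W : Submodule k V := orbSum (k := k) G E with hW
  set f : G → Submodule k V := fun g => E.map (aMap k g) with hfdef
  have hWmap : ∀ g : G, W.map (aMap k g) = W := by
    intro g
    rw [hW, orbSum, Submodule.map_iSup]
    apply le_antisymm
    · apply iSup_le
      intro h
      rw [map_aMap_map_aMap]
      exact le_iSup (fun h' => E.map (aMap k h')) (g * h)
    · apply iSup_le
      intro h
      have h1 : E.map (aMap k h) = (E.map (aMap k (g⁻¹ * h))).map (aMap k g) := by
        have h2 : g * (g⁻¹ * h) = h := mul_inv_cancel_left g h
        rw [map_aMap_map_aMap, h2]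
      rw [h1]
      exact le_iSup (fun h' => (E.map (aMap k h')).map (aMap k g)) (g⁻¹ * h)
  have hWset : ∀ g : G, g • (W : Set V) = W := by
    intro g
    have h1 : g • (W : Set V) = (aMap k g) '' (W : Set V) := by
      ext v
      simp [Set.mem_smul_set]
    rw [h1, ← Submodule.map_coe (aMap k g) W, hWmap g]
  have hEW : E ≤ W := by
    have h1 : E.map (aMap k (1 : G)) ≤ W := by
      rw [hW, orbSum]
      exact le_iSup (fun g => E.map (aMap k g)) 1
    rwa [aMap_one, Submodule.map_id] at h1
  obtain ⟨sb, hsb⟩ := hEsub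
  have hgoodW : ∀ x : X, rk (A x) W ≤ (r : Cardinal) := hEgood
  -- finiteness of W modulo E
  have hfinQ : Module.rank k ↥(W.map E.mkQ) < Cardinal.aleph0 := by
    have h1 : W.map E.mkQ ≤ (W ⊔ A sb).map E.mkQ := Submodule.map_mono le_sup_left
    refine lt_of_le_of_lt (Submodule.rank_mono h1) ?_
    have h2 := rank_le_map_mkQ_add ((W ⊔ A sb).map E.mkQ) ((A sb).map E.mkQ)
    have hbfin : Module.rank k ↥((A sb).map E.mkQ) ≤ (((r+1)^r * (r+1) - 1 : ℕ) : Cardinal) :=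
      hEc sb
    have h3 : Module.rank k ↥(((W ⊔ A sb).map E.mkQ).map ((A sb).map E.mkQ).mkQ)
        ≤ (r : Cardinal) := by
      have hcomp : ((W ⊔ A sb).map E.mkQ).map ((A sb).map E.mkQ).mkQ
          = (W ⊔ A sb).map (((A sb).map E.mkQ).mkQ.comp E.mkQ) := by
        rw [Submodule.map_comp]
      have hker : LinearMap.ker (((A sb).map E.mkQ).mkQ.comp E.mkQ) = A sb := by
        rw [LinearMap.ker_comp, Submodule.ker_mkQ, Submodule.comap_map_eq, Submodule.ker_mkQ]
        exact sup_eq_left.mpr hsb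
      rw [hcomp, rank_map_eq_rank_quot, hker, ← rk_eq_quot]
      have h4 : rk (A sb) (A sb) = 0 := by
        rw [rk, map_mkQ_eq_bot le_rfl, rank_bot]
      calc rk (A sb) (W ⊔ A sb) ≤ rk (A sb) W + rk (A sb) (A sb) := rk_sup_le _ _ _
        _ = rk (A sb) W := by rw [h4, add_zero]
        _ ≤ (r : Cardinal) := hgoodW sb
    calc Module.rank k ↥((W ⊔ A sb).map E.mkQ)
        ≤ Module.rank k ↥(((W ⊔ A sb).map E.mkQ).map ((A sb).map E.mkQ).mkQ)
            + Module.rank k ↥((A sb).map E.mkQ) := h2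
      _ ≤ (r : Cardinal) + (((r+1)^r * (r+1) - 1 : ℕ) : Cardinal) := add_le_add h3 hbfin
      _ < Cardinal.aleph0 :=
          Cardinal.add_lt_aleph0 (Cardinal.nat_lt_aleph0 _) (Cardinal.nat_lt_aleph0 _)
  haveI hfree : Module.Free k ↥(W.map E.mkQ) := Module.Free.of_divisionRing k _
  have hfinite : Module.Finite k ↥(W.map E.mkQ) := (Module.rank_lt_aleph0_iff).mp hfinQ
  have hFG : (W.map E.mkQ).FG := (Module.Finite.iff_fg).mp hfinite
  obtain ⟨t, ht⟩ := hFG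
  have hWsupmem : ∀ w : V, w ∈ W → ∃ u : Finset G, w ∈ u.sup f := by
    intro w hw
    rw [hW, orbSum] at hw
    obtain ⟨u, hu⟩ := (Submodule.mem_iSup_iff_exists_finset).mp hw
    refine ⟨u, ?_⟩
    rw [Finset.sup_eq_iSup]
    exact hu
  have hta : ∀ v : V ⧸ E, v ∈ t → ∃ u : Finset G, v ∈ Submodule.map E.mkQ (u.sup f) := by
    intro v hv
    have hvW : v ∈ W.map E.mkQ := by
      rw [← ht]; exact Submodule.subset_span hv
    obtain ⟨w, hw, rfl⟩ := hvW
    obtain ⟨u, hu⟩ := hWsupmem w hw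
    exact ⟨u, ⟨w, hu, rfl⟩⟩
  choose Fu hFu using hta
  set U : Finset G := insert (1 : G) (t.attach.sup (fun v => Fu v.1 v.2)) with hU
  have hUW : U.sup f = W := by
    apply le_antisymm
    · apply Finset.sup_le
      intro g _
      rw [hW, orbSum]
      exact le_iSup (fun g => E.map (aMap k g)) g
    · intro w hw
      have h1 : E.mkQ w ∈ Submodule.map E.mkQ (U.sup f) := by
        have h2 : Submodule.span k (↑t) ≤ Submodule.map E.mkQ (U.sup f) := by
          rw [Submodule.span_le]
          intro v hv
          have hv' : v ∈ t := hv
          refine Submodule.map_mono (Finset.sup_mono ?_) (hFu v hv')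
          intro g hg
          refine Finset.mem_insert_of_mem ?_
          exact Finset.le_sup (f := fun v : {x // x ∈ t} => Fu v.1 v.2)
            (Finset.mem_attach t ⟨v, hv'⟩) hg
        apply h2
        rw [ht]
        exact ⟨w, hw, rfl⟩
      obtain ⟨w', hw', hww⟩ := h1
      have hdiff : w - w' ∈ E := by
        rw [← Submodule.ker_mkQ E, LinearMap.mem_ker, map_sub, hww, sub_self]
      have hE' : E ≤ U.sup f := by
        have h1 : f 1 = E := by rw [hfdef]; simp [aMap_one]
        rw [← h1]
        exact Finset.le_sup (Finset.mem_insert_self 1 _)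
      have hsum : w = w' + (w - w') := by abel
      rw [hsum]
      exact Submodule.add_mem _ hw' (hE' hdiff)
  have hfint : ∀ g : G, IsInter A (f g) := fun g => isInter_map A hmem g hEint
  choose Sg hSg using hfint
  set n := U.card with hn
  set e := U.equivFin with he
  set T : Fin n → Finset X := fun i => Sg ((e.symm i : G)) with hT
  refine ⟨W, hWset, ⟨n, T, fun i => (hSg _).1, ?_⟩, ?_⟩
  · rw [← hUW]
    apply le_antisymm
    · apply Finset.sup_le
      intro g hg
      have h1 : f g = (T (e ⟨g, hg⟩)).inf A := by
        have h2 : e.symm (e ⟨g, hg⟩) = ⟨g, hg⟩ := Equiv.symm_apply_apply e ⟨g, hg⟩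
        show f g = (Sg ((e.symm (e ⟨g, hg⟩) : {x // x ∈ U}) : G)).inf A
        rw [h2]
        exact (hSg g).2
      rw [h1]
      exact le_iSup (fun i => (T i).inf A) (e ⟨g, hg⟩)
    · apply iSup_le
      intro i
      have h1 : (T i).inf A = f ((e.symm i : G)) := ((hSg _).2).symm
      rw [h1]
      exact Finset.le_sup (e.symm i).2
  · intro x
    constructor
    · rw [← rk_eq_quot]
      exact hgoodW x
    · rw [← rk_eq_quot]
      have h1 : rk W (A x) ≤ rk E (A x) := rk_mono_den (A x) hEW
      refine le_trans (le_trans h1 (hEc x)) ?_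
      have h2 : (r+1)^r * (r+1) - 1 ≤ r * (r + 1) ^ (r + 1) := by
        have h3 : (r+1)^r * (r+1) = (r+1)^(r+1) := (pow_succ _ _).symm
        have h4 : 1 * (r+1)^(r+1) ≤ r * (r+1)^(r+1) := Nat.mul_le_mul_right _ hr
        omega
      exact_mod_cast Nat.cast_le.mpr h2
end

section
/- Let V be a vector space, X a collection of subspaces A_x with dim(A_x/(A_x ∩ A_y)) ≤ r for all x, y. For S ⊆ X nonempty set A_S := ⋂_{x∈S} A_x, and let 𝒮_m be the collection of nonempty S with dim((A_S + A_x)/A_x) ≤ m for all x ∈ X. If S ∈ 𝒮_m with |S| = h(m) minimal, and if h(m-1) > (r+1)h(m) + 1, then the subspace W := Σ_{S ∈ 𝒮_m, |S|=h(m)} A_S satisfies dim((W + A_x)/A_x) ≤ r for every x ∈ X. -/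
open Submodule

lemma rankL1 {k V : Type*} [Field k] [AddCommGroup V] [Module k V]
    (P N : Submodule k V) :
    Module.rank k (↥P ⧸ Submodule.comap P.subtype N)
      = Module.rank k ↥(P.map N.mkQ) := by
  have hker : LinearMap.ker (N.mkQ ∘ₗ P.subtype) = Submodule.comap P.subtype N := by
    rw [LinearMap.ker_comp, Submodule.ker_mkQ]
  have hrange : LinearMap.range (N.mkQ ∘ₗ P.subtype) = P.map N.mkQ := by
    rw [LinearMap.range_comp, Submodule.range_subtype]
  have e := (LinearMap.quotKerEquivRange (N.mkQ ∘ₗ P.subtype)).rank_eq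
  rw [hker, hrange] at e
  exact e

lemma rankL2 {k V : Type*} [Field k] [AddCommGroup V] [Module k V]
    (P N : Submodule k V) :
    Module.rank k (↥(P ⊔ N) ⧸ Submodule.comap (P ⊔ N).subtype N)
      = Module.rank k ↥(P.map N.mkQ) := by
  have h1 : Submodule.comap P.subtype (P ⊓ N) = Submodule.comap P.subtype N := by
    ext z; simp [Submodule.mem_comap, z.2]
  have e := (LinearMap.quotientInfEquivSupQuotient P N).rank_eq
  rw [← Submodule.comap_inf, h1] at e
  rw [← e, rankL1]

lemma fdOfRank {K V : Type*} [Field K] [AddCommGroup V] [Module K V]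
    (h : Module.rank K V < Cardinal.aleph0) : FiniteDimensional K V :=
  IsNoetherian.iff_fg.1 (IsNoetherian.iff_rank_lt_aleph0.2 h)

lemma fd_bsup {K V ι : Type*} [Field K] [AddCommGroup V] [Module K V]
    (𝒯 : Finset ι) (f : ι → Submodule K V)
    (h : ∀ S ∈ 𝒯, FiniteDimensional K (f S)) :
    FiniteDimensional K ↥(⨆ S ∈ 𝒯, f S) := by
  classical
  induction 𝒯 using Finset.induction_on with
  | empty => rw [show (⨆ S ∈ (∅ : Finset ι), f S) = ⊥ by simp]; infer_instance
  | @insert a s hS ih =>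
    rw [show (⨆ S ∈ insert a s, f S) = f a ⊔ ⨆ S ∈ s, f S by
      exact Finset.iSup_insert a s f]
    haveI := h a (Finset.mem_insert_self a s)
    haveI := ih fun S hS => h S (Finset.mem_insert_of_mem hS)
    exact Submodule.finiteDimensional_sup _ _

lemma union_card {X : Type*} (𝒯 : Finset (Set X)) (n : ℕ)
    (h : ∀ S ∈ 𝒯, S.Finite ∧ S.ncard = n) :
    (⋃ S ∈ 𝒯, S).Finite ∧ (⋃ S ∈ 𝒯, S).ncard ≤ 𝒯.card * n := by
  classical
  induction 𝒯 using Finset.induction_on with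
  | empty => simp
  | @insert a s hS ih =>
    have hU : (⋃ S ∈ insert a s, S) = a ∪ ⋃ S ∈ s, S := by
      exact Finset.set_biUnion_insert a s id
    obtain ⟨hfin, hcard⟩ := ih fun S hS => h S (Finset.mem_insert_of_mem hS)
    obtain ⟨hafin, hancard⟩ := h a (Finset.mem_insert_self a s)
    constructor
    · rw [hU]; exact hafin.union hfin
    · rw [hU, Finset.card_insert_of_notMem hS]
      calc (a ∪ ⋃ S ∈ s, S).ncard ≤ a.ncard + (⋃ S ∈ s, S).ncard := Set.ncard_union_le _ _
        _ ≤ n + s.card * n := by omega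
        _ = (s.card + 1) * n := by ring


/-- `SS A j` is the collection `𝒮_j` of nonempty subsets `S ⊆ X` such that
`dim((A_S + A_x)/A_x) ≤ j` for all `x ∈ X`, where `A_S = ⋂_{y∈S} A_y`. -/
def SS {k V X : Type*} [Field k] [AddCommGroup V] [Module k V]
    (A : X → Submodule k V) (j : ℕ) : Set (Set X) :=
  {S | S.Nonempty ∧ ∀ x : X,
    Module.rank k
      (↥((⨅ y ∈ S, A y) ⊔ A x) ⧸
        Submodule.comap ((⨅ y ∈ S, A y) ⊔ A x).subtype (A x)) ≤ j}

set_option maxHeartbeats 1000000 in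
/-- Key step of Case 1 in the proof of Theorem A: if `h(m)` is attained by sets of
size `n` and `h(m-1) > (r+1)·h(m) + 1`, then
`W := Σ_{S ∈ 𝒮_m, |S| = h(m)} A_S` satisfies `dim((W + A_x)/A_x) ≤ r` for all `x`. -/
theorem stmt5 {k V X : Type*} [Field k] [AddCommGroup V] [Module k V]
    (A : X → Submodule k V) (r m n : ℕ) (hm1 : 1 ≤ m) (hmr : m ≤ r)
    (hdim : ∀ x y : X,
      Module.rank k (↥(A x) ⧸ Submodule.comap (A x).subtype (A y)) ≤ r)
    (hmin : ∀ S ∈ SS A m, S.Finite → n ≤ S.ncard)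
    (hex : ∃ S ∈ SS A m, S.Finite ∧ S.ncard = n)
    (hgap : ∀ S ∈ SS A (m - 1), S.Finite → (r + 1) * n + 1 < S.ncard) :
    ∀ x : X,
      Module.rank k
        (↥(((⨆ S ∈ {S ∈ SS A m | S.Finite ∧ S.ncard = n}, ⨅ y ∈ S, A y)) ⊔ A x) ⧸
          Submodule.comap
            ((⨆ S ∈ {S ∈ SS A m | S.Finite ∧ S.ncard = n}, ⨅ y ∈ S, A y) ⊔ A x).subtype
            (A x)) ≤ r := by
  classical
  intro x
  set fam : Set (Set X) := {S ∈ SS A m | S.Finite ∧ S.ncard = n} with hfam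
  rw [rankL2]
  by_contra hcon
  push_neg at hcon
  -- notation
  set AS : Set X → Submodule k V := fun S => ⨅ y ∈ S, A y with hAS
  -- the image of W
  have hWmap : (⨆ S ∈ fam, AS S).map (A x).mkQ = ⨆ S ∈ fam, (AS S).map (A x).mkQ := by
    rw [Submodule.map_iSup]; congr 1; ext S; rw [Submodule.map_iSup]
  rw [hWmap] at hcon
  -- basic facts about members of fam / SS
  have hSSrank : ∀ j : ℕ, ∀ S ∈ SS A j, ∀ z : X,
      Module.rank k ↥((AS S).map (A z).mkQ) ≤ j := by
    intro j S hS z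
    have := hS.2 z
    rwa [rankL2] at this
  have hSSfd : ∀ j : ℕ, ∀ S ∈ SS A j, ∀ z : X,
      FiniteDimensional k ↥((AS S).map (A z).mkQ) := by
    intro j S hS z
    have := (hSSrank j S hS z).trans_lt (Cardinal.nat_lt_aleph0 j)
    exact fdOfRank this
  -- greedy construction
  have key : ∀ j : ℕ, j ≤ r + 1 → ∃ 𝒯 : Finset (Set X), (∀ S ∈ 𝒯, S ∈ fam) ∧
      𝒯.card ≤ j ∧ j ≤ Module.finrank k ↥(⨆ S ∈ 𝒯, (AS S).map (A x).mkQ) := by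
    intro j
    induction j with
    | zero => exact fun _ => ⟨∅, by simp, by simp, by simp⟩
    | succ j ih =>
      intro hj
      obtain ⟨𝒯, h𝒯fam, hcard, hrk⟩ := ih (Nat.le_of_succ_le hj)
      set D := ⨆ S ∈ 𝒯, (AS S).map (A x).mkQ with hD
      haveI : FiniteDimensional k ↥D :=
        fd_bsup 𝒯 _ (fun S hS => hSSfd m S (h𝒯fam S hS).1 x)
      by_cases hcase : j + 1 ≤ Module.finrank k ↥D
      · exact ⟨𝒯, h𝒯fam, hcard.trans (Nat.le_succ j), hcase⟩
      · have hfr : Module.finrank k ↥D ≤ r := by omega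
        have hDr : Module.rank k ↥D ≤ (r : Cardinal) := by
          rw [← Module.finrank_eq_rank]
          exact_mod_cast Nat.cast_le.mpr hfr
        have hex2 : ∃ S ∈ fam, ¬ ((AS S).map (A x).mkQ ≤ D) := by
          by_contra hall
          push_neg at hall
          have hle : (⨆ S ∈ fam, (AS S).map (A x).mkQ) ≤ D := iSup₂_le hall
          exact absurd ((Submodule.rank_mono hle).trans hDr) (not_le.mpr hcon)
        obtain ⟨S, hSfam, hSnle⟩ := hex2
        refine ⟨insert S 𝒯, ?_, ?_, ?_⟩
        · intro T hT
          rcases Finset.mem_insert.mp hT with h | h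
          · exact h ▸ hSfam
          · exact h𝒯fam T h
        · exact (Finset.card_insert_le S 𝒯).trans (Nat.succ_le_succ hcard)
        · rw [Finset.iSup_insert, ← hD]
          haveI := hSSfd m S hSfam.1 x
          haveI : FiniteDimensional k ↥((AS S).map (A x).mkQ ⊔ D) :=
            Submodule.finiteDimensional_sup _ _
          have hlt : D < (AS S).map (A x).mkQ ⊔ D := by
            rw [sup_comm]
            exact left_lt_sup.mpr hSnle
          have := Submodule.finrank_lt_finrank_of_lt hlt
          omega
  obtain ⟨𝒯, h𝒯fam, hcard, hrk⟩ := key (r + 1) le_rfl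
  set D := ⨆ S ∈ 𝒯, (AS S).map (A x).mkQ with hD
  -- the big set T
  set T : Set X := (⋃ S ∈ 𝒯, S) ∪ {x} with hT
  obtain ⟨hUfin, hUcard⟩ := union_card 𝒯 n (fun S hS => (h𝒯fam S hS).2)
  have hTfin : T.Finite := hUfin.union (Set.finite_singleton x)
  have hTcard : T.ncard ≤ (r + 1) * n + 1 := by
    rw [hT]
    have := Set.ncard_union_le (⋃ S ∈ 𝒯, S) {x}
    have h1 : ({x} : Set X).ncard = 1 := Set.ncard_singleton x
    have h2 : 𝒯.card * n ≤ (r + 1) * n := Nat.mul_le_mul_right n hcard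
    omega
  have hxT : x ∈ T := Set.mem_union_right _ rfl
  have hTsub : ∀ S ∈ 𝒯, S ⊆ T := by
    intro S hS
    intro z hz
    exact Set.mem_union_left _ (Set.mem_iUnion₂.mpr ⟨S, hS, hz⟩)
  have hATle : ∀ S ∈ 𝒯, AS T ≤ AS S := by
    intro S hS
    exact biInf_mono (fun y hy => hTsub S hS hy)
  have hATx : AS T ≤ A x := iInf₂_le x hxT
  -- T ∈ SS A (m-1)
  have hTSS : T ∈ SS A (m - 1) := by
    constructor
    · exact ⟨x, hxT⟩
    intro y
    rw [rankL2]
    by_contra hy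
    push_neg at hy
    -- 𝒯 is nonempty
    have h𝒯ne : ∃ S₀, S₀ ∈ 𝒯 := by
      by_contra hne
      push_neg at hne
      have he : 𝒯 = ∅ := Finset.eq_empty_of_forall_notMem hne
      have hDbot : D = ⊥ := by rw [hD, he]; simp
      rw [hDbot] at hrk
      simp at hrk
    obtain ⟨S₀, hS₀⟩ := h𝒯ne
    haveI := hSSfd m S₀ (h𝒯fam S₀ hS₀).1 y
    have hTle0 : (AS T).map (A y).mkQ ≤ (AS S₀).map (A y).mkQ :=
      Submodule.map_mono (hATle S₀ hS₀)
    haveI : FiniteDimensional k ↥((AS T).map (A y).mkQ) := by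
      apply fdOfRank
      exact (Submodule.rank_mono hTle0).trans_lt
        ((hSSrank m S₀ (h𝒯fam S₀ hS₀).1 y).trans_lt (Cardinal.nat_lt_aleph0 m))
    have hfrT : m ≤ Module.finrank k ↥((AS T).map (A y).mkQ) := by
      by_contra hlt
      push_neg at hlt
      have hn : Module.finrank k ↥((AS T).map (A y).mkQ) ≤ m - 1 := by omega
      have hc : Module.rank k ↥((AS T).map (A y).mkQ) ≤ ((m - 1 : ℕ) : Cardinal) := by
        rw [← Module.finrank_eq_rank]
        exact_mod_cast hn
      exact absurd hc (not_le.mpr hy)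
    -- for each S in 𝒯 the images mod A y agree
    have himeq : ∀ S ∈ 𝒯, (AS T).map (A y).mkQ = (AS S).map (A y).mkQ := by
      intro S hS
      haveI := hSSfd m S (h𝒯fam S hS).1 y
      have h2 : Module.finrank k ↥((AS S).map (A y).mkQ)
          ≤ Module.finrank k ↥((AS T).map (A y).mkQ) :=
        (Module.finrank_le_of_rank_le (hSSrank m S (h𝒯fam S hS).1 y)).trans hfrT
      exact Submodule.eq_of_le_of_finrank_le (Submodule.map_mono (hATle S hS)) h2
    have hScontain : ∀ S ∈ 𝒯, AS S ≤ A x ⊔ A y := by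
      intro S hS
      have h1 : AS S ≤ Submodule.comap (A y).mkQ ((AS S).map (A y).mkQ) :=
        Submodule.le_comap_map _ _
      rw [← himeq S hS, Submodule.comap_map_mkQ] at h1
      exact h1.trans (sup_le le_sup_right (hATx.trans le_sup_left))
    -- bound D
    have hmapbot : (A x).map (A x).mkQ = ⊥ := by
      rw [eq_bot_iff, Submodule.map_le_iff_le_comap, Submodule.comap_bot, Submodule.ker_mkQ]
    have hDle : D ≤ (A y).map (A x).mkQ := by
      rw [hD]
      apply iSup₂_le
      intro S hS
      have h3 : (AS S).map (A x).mkQ ≤ (A x ⊔ A y).map (A x).mkQ :=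
        Submodule.map_mono (hScontain S hS)
      rwa [Submodule.map_sup, hmapbot, bot_sup_eq] at h3
    have hrD : Module.rank k ↥D ≤ (r : Cardinal) := by
      refine (Submodule.rank_mono hDle).trans ?_
      rw [← rankL1]
      exact hdim y x
    have hfrD := Module.finrank_le_of_rank_le hrD
    omega
  have := hgap T hTSS hTfin
  omega
end

section
/- Let X be a set with an action of a finite group G, and A ⊆ X with |A \ gA| ≤ r for all g ∈ G. Suppose ⋂_{g∈S} gA = ⋂_{g∈G} gA for every S ⊆ G with |S| > |G|/2, and that A is not G-invariant. Then the G-invariant set A₀' := ⋃_{|S| ≥ |G|/2} ⋂_{g∈S} gA satisfies |A \ A₀'| + |A₀' \ A| < 2r (strict inequality). -/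
open Pointwise

/-- Remark after Theorem 3.1: if all intersections `⋂_{g∈S} gA` over `S` with
`|S| > |G|/2` degenerate to `⋂_{g∈G} gA`, and `A` is not `G`-invariant, then
`A₀' := ⋃_{|S| ≥ |G|/2} ⋂_{g∈S} gA` satisfies the strict inequality
`|A \ A₀'| + |A₀' \ A| < 2r`. -/
theorem stmt11 {X : Type*} {G : Type*} [Group G] [Finite G] [MulAction G X]
    (A : Set X) (r : ℕ) (hr : 0 < r)
    (hfin : ∀ g : G, (A \ g • A).Finite)
    (hcard : ∀ g : G, (A \ g • A).ncard ≤ r)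
    (hdeg : ∀ S : Set G, Nat.card G < 2 * S.ncard →
      (⋂ g ∈ S, g • A) = ⋂ g : G, g • A)
    (hnotinv : ∃ g : G, g • A ≠ A) :
    (A \ ⋃ S ∈ {S : Set G | Nat.card G ≤ 2 * S.ncard}, ⋂ g ∈ S, g • A).ncard
      + ((⋃ S ∈ {S : Set G | Nat.card G ≤ 2 * S.ncard}, ⋂ g ∈ S, g • A) \ A).ncard
      < 2 * r := by
  classical
  cases nonempty_fintype G
  set U : Set X := ⋃ S ∈ {S : Set G | Nat.card G ≤ 2 * S.ncard}, ⋂ g ∈ S, g • A with hU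
  set n : ℕ := Nat.card G with hn'
  have hn : n = Fintype.card G := Nat.card_eq_fintype_card
  have hn0 : 0 < n := Nat.card_pos
  set m : X → ℕ := fun x => (Finset.univ.filter fun g : G => x ∈ g • A).card with hm
  have hmn : ∀ x, m x ≤ n := by
    intro x; rw [hm, hn]; exact (Finset.card_filter_le _ _)
  -- membership in U
  have hmemU : ∀ x : X, x ∈ U ↔ n ≤ 2 * m x := by
    intro x
    constructor
    · intro hx
      simp only [hU, Set.mem_iUnion, Set.mem_setOf_eq] at hx
      obtain ⟨S, hS, hxS⟩ := hx
      simp only [Set.mem_iInter] at hxS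
      have hsub : S ⊆ ↑(Finset.univ.filter fun g : G => x ∈ g • A) := by
        intro g hg
        simp only [Finset.coe_filter, Set.mem_setOf_eq]
        exact ⟨Finset.mem_univ g, hxS g hg⟩
      have h2 := Set.ncard_le_ncard hsub (Set.toFinite _)
      rw [Set.ncard_coe_finset] at h2
      have hmx : m x = (Finset.univ.filter fun g : G => x ∈ g • A).card := rfl
      omega
    · intro hx
      simp only [hU, Set.mem_iUnion, Set.mem_setOf_eq]
      refine ⟨↑(Finset.univ.filter fun g : G => x ∈ g • A), ?_, ?_⟩
      · rw [Set.ncard_coe_finset]; exact hx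
      · simp only [Set.mem_iInter, Finset.mem_coe, Finset.mem_filter]
        exact fun g hg => hg.2
  -- degenerate case: more than half implies all
  have hdeg' : ∀ x : X, n < 2 * m x → ∀ g : G, x ∈ g • A := by
    intro x hx g
    have h := hdeg ↑(Finset.univ.filter fun g : G => x ∈ g • A)
      (by rw [Set.ncard_coe_finset]; exact hx)
    have hxmem : x ∈ ⋂ g ∈ (↑(Finset.univ.filter fun g : G => x ∈ g • A) : Set G), g • A := by
      simp only [Set.mem_iInter, Finset.mem_coe, Finset.mem_filter]
      exact fun g hg => hg.2
    rw [h] at hxmem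
    exact Set.mem_iInter.1 hxmem g
  -- invariance of m
  have hminv : ∀ (h : G) (x : X), m (h • x) = m x := by
    intro h x
    rw [hm]
    refine Finset.card_nbij' (fun g => h⁻¹ * g) (fun g => h * g) ?_ ?_ ?_ ?_
    · intro g hg
      simp only [Finset.mem_coe, Finset.mem_filter, Finset.mem_univ, true_and] at hg ⊢
      rw [Set.mem_smul_set_iff_inv_smul_mem] at hg ⊢
      rwa [mul_inv_rev, inv_inv, mul_smul]
    · intro g hg
      simp only [Finset.mem_coe, Finset.mem_filter, Finset.mem_univ, true_and] at hg ⊢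
      rw [Set.mem_smul_set_iff_inv_smul_mem] at hg ⊢
      rwa [mul_inv_rev, mul_smul, inv_smul_smul]
    · intro g _; group
    · intro g _; group
  -- x ∈ A means m x counts the identity
  have hmA : ∀ x : X, x ∈ A → x ∈ (1 : G) • A := by
    intro x hx; rwa [one_smul]
  have hmax : ∀ x : X, m x = n → ∀ g : G, x ∈ g • A := by
    intro x hx g
    have : (Finset.univ.filter fun g : G => x ∈ g • A) = Finset.univ := by
      apply Finset.eq_univ_of_card
      rw [show (Finset.univ.filter fun g : G => x ∈ g • A).card = m x from rfl, hx, hn]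
    have hg : g ∈ (Finset.univ.filter fun g : G => x ∈ g • A) := by
      rw [this]; exact Finset.mem_univ g
    exact (Finset.mem_filter.1 hg).2
  have hexg : ∀ x : X, 0 < m x → ∃ g : G, x ∈ g • A := by
    intro x hx
    rw [hm] at hx
    obtain ⟨g, hg⟩ := Finset.card_pos.1 hx
    exact ⟨g, (Finset.mem_filter.1 hg).2⟩
  have hexh : ∀ x : X, m x < n → ∃ h : G, x ∉ h • A := by
    intro x hx
    by_contra hc
    push_neg at hc
    have : (Finset.univ.filter fun g : G => x ∈ g • A) = Finset.univ :=
      Finset.filter_true_of_mem (fun g _ => hc g)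
    rw [hm] at hx
    simp only [this, Finset.card_univ, ← hn] at hx
    omega
  -- the master finite set
  have hΩfin : (⋃ g : G, ⋃ h : G, g • (A \ h • A)).Finite :=
    Set.finite_iUnion fun g => Set.finite_iUnion fun h => (hfin h).smul_set
  have hmemΩ : ∀ x : X, (∃ g : G, x ∈ g • A) → (∃ h : G, x ∉ h • A) →
      x ∈ ⋃ g : G, ⋃ h : G, g • (A \ h • A) := by
    rintro x ⟨g, hg⟩ ⟨h, hh⟩
    refine Set.mem_iUnion.2 ⟨g, Set.mem_iUnion.2 ⟨g⁻¹ * h, ?_⟩⟩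
    rw [Set.mem_smul_set_iff_inv_smul_mem]
    refine ⟨Set.mem_smul_set_iff_inv_smul_mem.1 hg, fun hc => hh ?_⟩
    rw [Set.mem_smul_set_iff_inv_smul_mem] at hc ⊢
    rwa [mul_inv_rev, inv_inv, mul_smul, smul_inv_smul] at hc
  -- E, the half-level set
  set E : Set X := {x | 2 * m x = n} with hE
  have hEfin : E.Finite := by
    apply hΩfin.subset
    intro x hx
    rw [hE, Set.mem_setOf_eq] at hx
    exact hmemΩ x (hexg x (by omega)) (hexh x (by omega))
  have hPfin : (A \ U).Finite := by
    apply hΩfin.subset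
    intro x hx
    have hx2 : ¬ (n ≤ 2 * m x) := fun hc => hx.2 ((hmemU x).2 hc)
    exact hmemΩ x ⟨1, hmA x hx.1⟩ (hexh x (by omega))
  have hUA : U \ A = E \ A := by
    ext x
    simp only [Set.mem_diff, hE, Set.mem_setOf_eq]
    constructor
    · rintro ⟨hxU, hxA⟩
      have h1 : n ≤ 2 * m x := (hmemU x).1 hxU
      have h2 : m x ≠ n := fun hc => hxA (by rw [← one_smul G A]; exact hmax x hc 1)
      have h3 : ¬ (n < 2 * m x) := fun hc => hxA (by rw [← one_smul G A]; exact hdeg' x hc 1)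
      exact ⟨by omega, hxA⟩
    · rintro ⟨hxE, hxA⟩
      exact ⟨(hmemU x).2 (by omega), hxA⟩
  -- summation machinery
  have hsumm : ∀ F : Finset X, ∑ g : G, (F.filter fun x => x ∈ g • A).card = ∑ x ∈ F, m x := by
    intro F
    simp only [hm, Finset.card_filter]
    exact Finset.sum_comm
  have hcompl : ∀ x : X, (Finset.univ.filter fun g : G => x ∉ g • A).card = n - m x := by
    intro x
    have := Finset.card_filter_add_card_filter_not (s := (Finset.univ : Finset G))
      (p := fun g : G => x ∈ g • A)
    rw [Finset.card_univ, ← hn] at this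
    have hmx : m x = (Finset.univ.filter fun g : G => x ∈ g • A).card := rfl
    omega
  have hsumnm : ∀ F : Finset X,
      ∑ g : G, (F.filter fun x => x ∉ g • A).card = ∑ x ∈ F, (n - m x) := by
    intro F
    have h1 : ∑ g : G, (F.filter fun x => x ∉ g • A).card
        = ∑ x ∈ F, (Finset.univ.filter fun g : G => x ∉ g • A).card := by
      simp only [Finset.card_filter]
      exact Finset.sum_comm
    rw [h1]
    exact Finset.sum_congr rfl fun x _ => hcompl x
  -- per-element bound
  have hbound : ∀ (F : Finset X), ↑F ⊆ A → ∀ g : G,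
      (F.filter fun x => x ∉ g • A).card ≤ r := by
    intro F hF g
    have hsub : ↑(F.filter fun x => x ∉ g • A) ⊆ A \ g • A := by
      intro x hx
      simp only [Finset.coe_filter, Set.mem_setOf_eq] at hx
      exact ⟨hF hx.1, hx.2⟩
    calc (F.filter fun x => x ∉ g • A).card
        = (↑(F.filter fun x => x ∉ g • A) : Set X).ncard := (Set.ncard_coe_finset _).symm
      _ ≤ (A \ g • A).ncard := Set.ncard_le_ncard hsub (hfin g)
      _ ≤ r := hcard g
  have htot : ∀ F : Finset X, ↑F ⊆ A →
      ∑ g : G, (F.filter fun x => x ∉ g • A).card ≤ (n - 1) * r := by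
    intro F hF
    have h1 : (F.filter fun x => x ∉ (1 : G) • A).card = 0 := by
      rw [Finset.card_eq_zero, Finset.filter_eq_empty_iff]
      intro x hx hc
      exact hc (hmA x (hF hx))
    calc ∑ g : G, (F.filter fun x => x ∉ g • A).card
        = (F.filter fun x => x ∉ (1 : G) • A).card
            + ∑ g ∈ (Finset.univ : Finset G).erase 1, (F.filter fun x => x ∉ g • A).card :=
          (Finset.add_sum_erase _ _ (Finset.mem_univ 1)).symm
      _ = ∑ g ∈ (Finset.univ : Finset G).erase 1, (F.filter fun x => x ∉ g • A).card := by
          omega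
      _ ≤ ((Finset.univ : Finset G).erase 1).card • r :=
          Finset.sum_le_card_nsmul _ _ r (fun g _ => hbound F hF g)
      _ = (n - 1) * r := by
          rw [Finset.card_erase_of_mem (Finset.mem_univ 1), Finset.card_univ, ← hn, smul_eq_mul]
  -- double counting on E : |E ∩ A| = |E \ A|
  set EF : Finset X := hEfin.toFinset with hEF
  have hEFmem : ∀ x : X, x ∈ EF ↔ 2 * m x = n := by
    intro x; rw [hEF, Set.Finite.mem_toFinset]; rfl
  have hEshift : ∀ g : G, (EF.filter fun x => x ∈ g • A).card
      = (EF.filter fun x => x ∈ A).card := by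
    intro g
    refine Finset.card_nbij' (fun x => g⁻¹ • x) (fun x => g • x) ?_ ?_ ?_ ?_
    · intro x hx
      simp only [Finset.mem_coe, Finset.mem_filter] at hx ⊢
      refine ⟨?_, ?_⟩
      · rw [hEFmem] at hx ⊢; rw [hminv]; exact hx.1
      · exact Set.mem_smul_set_iff_inv_smul_mem.1 hx.2
    · intro x hx
      simp only [Finset.mem_coe, Finset.mem_filter] at hx ⊢
      refine ⟨?_, ?_⟩
      · rw [hEFmem] at hx ⊢; rw [hminv]; exact hx.1
      · rw [Set.mem_smul_set_iff_inv_smul_mem, inv_smul_smul]; exact hx.2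
    · intro x _; simp [smul_smul]
    · intro x _; simp [smul_smul]
  have hEsum : n * (EF.filter fun x => x ∈ A).card = ∑ x ∈ EF, m x := by
    rw [← hsumm EF]
    rw [Finset.sum_congr rfl (fun g _ => hEshift g), Finset.sum_const, Finset.card_univ,
      ← hn, smul_eq_mul]
  have hEsum2 : 2 * ∑ x ∈ EF, m x = n * EF.card := by
    calc 2 * ∑ x ∈ EF, m x = ∑ x ∈ EF, 2 * m x := by rw [Finset.mul_sum]
      _ = ∑ x ∈ EF, n := Finset.sum_congr rfl fun x hx => (hEFmem x).1 hx
      _ = n * EF.card := by rw [Finset.sum_const, smul_eq_mul, mul_comm]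
  have hEsplit : (EF.filter fun x => x ∈ A).card + (EF.filter fun x => x ∉ A).card
      = EF.card := Finset.card_filter_add_card_filter_not _
  have hEbal : (EF.filter fun x => x ∈ A).card = (EF.filter fun x => x ∉ A).card := by
    have h1 : 2 * (n * (EF.filter fun x => x ∈ A).card) = n * EF.card := by
      rw [hEsum]; exact hEsum2
    have hn1 : 1 ≤ n := hn0
    nlinarith [hEsplit, h1]
  -- identify the two ncard's with finset cards
  set PF : Finset X := hPfin.toFinset with hPF
  have hPFmem : ∀ x : X, x ∈ PF ↔ x ∈ A ∧ x ∉ U := by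
    intro x; rw [hPF, Set.Finite.mem_toFinset]; rfl
  set EAF : Finset X := EF.filter fun x => x ∈ A with hEAF
  have hgoal1 : (A \ U).ncard = PF.card := Set.ncard_eq_toFinset_card _ hPfin
  have hgoal2 : (U \ A).ncard = (EF.filter fun x => x ∉ A).card := by
    rw [hUA]
    have hset : E \ A = ↑(EF.filter fun x => x ∉ A) := by
      ext x
      constructor
      · rintro ⟨h1, h2⟩
        exact Finset.mem_coe.2 (Finset.mem_filter.2 ⟨(hEFmem x).2 h1, h2⟩)
      · intro hx
        have hx' := Finset.mem_filter.1 (Finset.mem_coe.1 hx)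
        exact ⟨(hEFmem x).1 hx'.1, hx'.2⟩
    rw [hset, Set.ncard_coe_finset]
  -- the main counting over W = PF ∪ EAF
  have hdisj : Disjoint PF EAF := by
    rw [Finset.disjoint_left]
    intro x hx hx'
    have h1 := (hPFmem x).1 hx
    have h2 := (hEFmem x).1 (Finset.mem_filter.1 hx').1
    exact h1.2 ((hmemU x).2 (by omega))
  set W : Finset X := PF ∪ EAF with hW
  have hWA : ↑W ⊆ A := by
    intro x hx
    rw [hW, Finset.coe_union] at hx
    rcases hx with hx | hx
    · exact ((hPFmem x).1 hx).1
    · exact (Finset.mem_filter.1 hx).2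
  have hmain : ∑ x ∈ W, (n - m x) ≤ (n - 1) * r := by
    rw [← hsumnm W]; exact htot W hWA
  have hlowP : ∀ x ∈ PF, n + 1 ≤ 2 * (n - m x) := by
    intro x hx
    have h1 := (hPFmem x).1 hx
    have h2 : ¬ (n ≤ 2 * m x) := fun hc => h1.2 ((hmemU x).2 hc)
    have h3 := hmn x
    omega
  have hlowE : ∀ x ∈ EAF, n ≤ 2 * (n - m x) := by
    intro x hx
    have h1 := (hEFmem x).1 (Finset.mem_filter.1 hx).1
    have h2 := hmn x
    omega
  have hsplitW : ∑ x ∈ W, 2 * (n - m x)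
      = ∑ x ∈ PF, 2 * (n - m x) + ∑ x ∈ EAF, 2 * (n - m x) := Finset.sum_union hdisj
  have hlow : (n + 1) * PF.card + n * EAF.card ≤ 2 * ((n - 1) * r) := by
    calc (n + 1) * PF.card + n * EAF.card
        = PF.card • (n + 1) + EAF.card • n := by
          rw [smul_eq_mul, smul_eq_mul, mul_comm PF.card, mul_comm EAF.card]
      _ ≤ ∑ x ∈ PF, 2 * (n - m x) + ∑ x ∈ EAF, 2 * (n - m x) :=
          Nat.add_le_add (Finset.card_nsmul_le_sum _ _ _ hlowP)
            (Finset.card_nsmul_le_sum _ _ _ hlowE)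
      _ = ∑ x ∈ W, 2 * (n - m x) := hsplitW.symm
      _ = 2 * ∑ x ∈ W, (n - m x) := by rw [Finset.mul_sum]
      _ ≤ 2 * ((n - 1) * r) := by omega
  -- conclude
  rw [hgoal1, hgoal2, ← hEbal]
  obtain ⟨k, hk⟩ : ∃ k, n = k + 1 := ⟨n - 1, by omega⟩
  rw [hk, Nat.add_sub_cancel] at hlow
  by_contra hc
  push_neg at hc
  have h1 : (k + 1) * (2 * r) ≤ (k + 1) * (PF.card + EAF.card) :=
    Nat.mul_le_mul_left (k + 1) hc
  have h2 : (k + 1) * (PF.card + EAF.card) ≤ (k + 1 + 1) * PF.card + (k + 1) * EAF.card := by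
    rw [Nat.mul_add]
    exact Nat.add_le_add_right (Nat.mul_le_mul (by omega) (le_refl PF.card)) _
  have h5 : (k + 1) * (2 * r) ≤ 2 * (k * r) := le_trans h1 (le_trans h2 hlow)
  have h4 : (k + 1) * (2 * r) = 2 * (k * r) + 2 * r := by ring
  linarith
end

section
/- Let G be a finite group acting on a set X and A ⊆ X a subset with |A \ gA| ≤ r for all g ∈ G. Define A₀ := ⋃_{|S| > |G|/2} ⋂_{g∈S} gA, B := X \ A, P := {(a,g) ∈ A × G : ga ∉ A}, and P₂ := {(a,g) ∈ P : ga ∈ A₀}. Then (|G|/2)·|A₀ ∩ B| ≤ |P₂|. -/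
open Pointwise

/-- With `A₀ := ⋃_{|S| > |G|/2} ⋂_{g∈S} gA`, `B := X \ A`,
`P := {(a,g) ∈ A × G : ga ∉ A}` and `P₂ := {(a,g) ∈ P : ga ∈ A₀}`, one has
`(|G|/2)·|A₀ ∩ B| ≤ |P₂|` (stated as `|G|·|A₀ ∩ B| ≤ 2·|P₂|`). -/
theorem stmt13 {X : Type*} {G : Type*} [Group G] [Finite G] [MulAction G X]
    (A : Set X) (r : ℕ)
    (hfin : ∀ g : G, (A \ g • A).Finite)
    (hcard : ∀ g : G, (A \ g • A).ncard ≤ r) :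
    Nat.card G *
        ((⋃ S ∈ {S : Set G | Nat.card G < 2 * S.ncard}, ⋂ g ∈ S, g • A) ∩ (Set.univ \ A)).ncard
      ≤ 2 * ({p : X × G | p.1 ∈ A ∧ p.2 • p.1 ∉ A ∧
          p.2 • p.1 ∈ ⋃ S ∈ {S : Set G | Nat.card G < 2 * S.ncard}, ⋂ g ∈ S, g • A}).ncard := by
  classical
  have _inst := Fintype.ofFinite G
  set A₀ := (⋃ S ∈ {S : Set G | Nat.card G < 2 * S.ncard}, ⋂ g ∈ S, g • A) with hA₀
  set C := A₀ ∩ (Set.univ \ A) with hCdef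
  set P₂ := {p : X × G | p.1 ∈ A ∧ p.2 • p.1 ∉ A ∧ p.2 • p.1 ∈ A₀} with hP₂def
  -- membership in A₀ unpacked
  have hmemA₀ : ∀ b : X, b ∈ A₀ → ∃ S : Set G, Nat.card G < 2 * S.ncard ∧ ∀ g ∈ S, b ∈ g • A := by
    intro b hb
    simp only [hA₀, Set.mem_iUnion, Set.mem_setOf_eq, Set.mem_iInter] at hb
    obtain ⟨S, hS, hbS⟩ := hb
    exact ⟨S, hS, hbS⟩
  have hCfin : C.Finite := by
    have hsub : C ⊆ ⋃ g : G, (g • A \ A) := by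
      rintro b ⟨hb0, -, hbA⟩
      obtain ⟨S, hS, hbS⟩ := hmemA₀ b hb0
      have hSne : S.Nonempty := by
        rcases S.eq_empty_or_nonempty with rfl | h
        · simp [Set.ncard_empty] at hS
        · exact h
      obtain ⟨g, hg⟩ := hSne
      exact Set.mem_iUnion.2 ⟨g, hbS g hg, hbA⟩
    refine (Set.finite_iUnion fun g : G => ?_).subset hsub
    have : g • A \ A = g • (A \ g⁻¹ • A) := by
      ext x
      simp [Set.mem_smul_set_iff_inv_smul_mem, smul_smul]
    rw [this]
    exact (hfin g⁻¹).smul_set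
  have hP₂fin : P₂.Finite := by
    have hsub : P₂ ⊆ (fun p : X × G => (p.2⁻¹ • p.1, p.2)) '' (C ×ˢ (Set.univ : Set G)) := by
      rintro ⟨a, g⟩ ⟨ha, hga, hga0⟩
      exact ⟨(g • a, g), ⟨⟨hga0, trivial, hga⟩, trivial⟩, by simp⟩
    exact ((hCfin.prod Set.finite_univ).image _).subset hsub
  rw [Set.ncard_eq_toFinset_card _ hCfin, Set.ncard_eq_toFinset_card _ hP₂fin]
  have hmap : ∀ p ∈ hP₂fin.toFinset, (fun p : X × G => p.2 • p.1) p ∈ hCfin.toFinset := by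
    intro p hp
    rw [Set.Finite.mem_toFinset] at hp ⊢
    exact ⟨hp.2.2, trivial, hp.2.1⟩
  have hsum := Finset.card_eq_sum_card_fiberwise hmap
  have hfiber : ∀ b ∈ hCfin.toFinset,
      Nat.card G ≤ 2 * (hP₂fin.toFinset.filter (fun p : X × G => p.2 • p.1 = b)).card := by
    intro b hb
    rw [Set.Finite.mem_toFinset] at hb
    obtain ⟨hb0, -, hbA⟩ := hb
    obtain ⟨S, hS, hbS⟩ := hmemA₀ b hb0
    have hSfin : S.Finite := S.toFinite
    have hinj : S.ncard ≤ (hP₂fin.toFinset.filter (fun p : X × G => p.2 • p.1 = b)).card := by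
      rw [Set.ncard_eq_toFinset_card _ hSfin]
      refine Finset.card_le_card_of_injOn (fun g => (g⁻¹ • b, g)) ?_ ?_
      · intro g hg
        rw [Finset.mem_coe, Set.Finite.mem_toFinset] at hg
        rw [Finset.mem_coe, Finset.mem_filter, Set.Finite.mem_toFinset]
        refine ⟨⟨?_, ?_, ?_⟩, by simp⟩
        · have := hbS g hg
          rwa [Set.mem_smul_set_iff_inv_smul_mem] at this
        · simpa using hbA
        · simpa using hb0
      · intro g₁ _ g₂ _ h
        exact congrArg Prod.snd h
    omega
  calc Nat.card G * hCfin.toFinset.card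
      = ∑ _b ∈ hCfin.toFinset, Nat.card G := by
        rw [Finset.sum_const, smul_eq_mul, mul_comm]
    _ ≤ ∑ b ∈ hCfin.toFinset,
          2 * (hP₂fin.toFinset.filter (fun p : X × G => p.2 • p.1 = b)).card :=
        Finset.sum_le_sum hfiber
    _ = 2 * hP₂fin.toFinset.card := by rw [← Finset.mul_sum, ← hsum]
end
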